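/- If (f_n) are measurable on ℝ² and |f| ≤ liminf_n |f_n| a.e., then f₂* ≤ liminf_n (f_n)₂* pointwise on ℝ₊². In particular, if |f_n| increases to |f| pointwise, then (f_n)₂* increases to f₂*. -/

import Mathlib

open MeasureTheory Set ENNReal Filter

/-- Classical decreasing rearrangement of an `ℝ≥0∞`-valued function. -/
noncomputable def decRe {α : Type*} [MeasurableSpace α] (μ : Measure α)
    (g : α → ℝ≥0∞) (t : ℝ) : ℝ≥0∞ :=
  sInf {l : ℝ≥0∞ | μ {x | l < g x} ≤ ENNReal.ofReal t}

/-- `φ_E(x)`: the measure of the `x`-section of `E`. -/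
noncomputable def phiSec (E : Set (ℝ × ℝ)) (x : ℝ) : ℝ≥0∞ :=
  volume {y : ℝ | (x, y) ∈ E}

/-- The two-dimensional decreasing rearrangement `E*` of a set `E ⊆ ℝ²`. -/
def starSet (E : Set (ℝ × ℝ)) : Set (ℝ × ℝ) :=
  {p | 0 < p.1 ∧ 0 < p.2 ∧ ENNReal.ofReal p.2 < decRe volume (phiSec E) p.1}

/-- The two-dimensional decreasing rearrangement `f₂*` of a function (layer-cake formula). -/
noncomputable def rearr2 (f : ℝ × ℝ → ℝ) (x : ℝ × ℝ) : ℝ≥0∞ :=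
  ∫⁻ t in Set.Ioi (0 : ℝ), (starSet {p | t < |f p|}).indicator (fun _ => (1 : ℝ≥0∞)) x

/-- The open positive quadrant `ℝ₊²`. -/
def Quad : Set (ℝ × ℝ) := Set.Ioi 0 ×ˢ Set.Ioi 0

/-!
Fatou's lemma passes through each stage of the construction of `f₂*`. Since
`|f| ≤ liminf |fₙ|` a.e., almost every point of a level set `{t < |f|}` eventually lies in
`{t < |fₙ|}`; by Fubini, almost every vertical section inherits this, so Fatou's lemma for
sets gives `φ_E ≤ liminf φ_{Eₙ}` a.e. The same argument bounds the distribution functions,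
hence the decreasing rearrangements, hence membership in the sets `E*`, and Fatou's lemma for
the layer-cake integral concludes. For increasing `|fₙ|` the rearrangements increase and are
bounded by `f₂*`, so their limit is squeezed between `f₂*` and `liminf (fₙ)₂* ≥ f₂*`.
-/

section Fatou

variable {α : Type*} [MeasurableSpace α] {μ : Measure α}

theorem measure_setOf_eventually_mem_le_liminf (A : ℕ → Set α) :
    μ {x | ∀ᶠ n in atTop, x ∈ A n} ≤ liminf (fun n => μ (A n)) atTop := by
  have hmono : Monotone fun N => ⋂ n ≥ N, A n := fun a b hab =>
    biInter_subset_biInter_left fun n hn => hab.trans hn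
  have hset : {x | ∀ᶠ n in atTop, x ∈ A n} = ⋃ N, ⋂ n ≥ N, A n := by
    ext x
    simp [eventually_atTop]
  rw [hset, hmono.measure_iUnion, liminf_eq_iSup_iInf_of_nat]
  exact iSup_mono fun N => le_iInf₂ fun n hn => measure_mono (biInter_subset_of_mem hn)

theorem measure_le_liminf_of_ae_eventually_mem {E : Set α} {A : ℕ → Set α}
    (h : ∀ᵐ x ∂μ, x ∈ E → ∀ᶠ n in atTop, x ∈ A n) :
    μ E ≤ liminf (fun n => μ (A n)) atTop :=
  (measure_mono_ae h).trans (measure_setOf_eventually_mem_le_liminf A)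

theorem measure_lt_le_liminf_of_ae_le_liminf {g : α → ℝ≥0∞} {gn : ℕ → α → ℝ≥0∞}
    (h : ∀ᵐ x ∂μ, g x ≤ liminf (fun n => gn n x) atTop) (l : ℝ≥0∞) :
    μ {x | l < g x} ≤ liminf (fun n => μ {x | l < gn n x}) atTop :=
  measure_le_liminf_of_ae_eventually_mem <| h.mono fun _ hx hlt =>
    eventually_lt_of_lt_liminf (hlt.trans_le hx)

theorem decRe_mono {g g' : α → ℝ≥0∞} (h : g ≤ g') (t : ℝ) :
    decRe μ g t ≤ decRe μ g' t :=
  sInf_le_sInf fun _ hl => (measure_mono fun _ hx => lt_of_lt_of_le hx (h _)).trans hl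

theorem decRe_le_liminf_of_measure_lt_le_liminf {g : α → ℝ≥0∞} {gn : ℕ → α → ℝ≥0∞}
    (h : ∀ l, μ {x | l < g x} ≤ liminf (fun n => μ {x | l < gn n x}) atTop) (t : ℝ) :
    decRe μ g t ≤ liminf (fun n => decRe μ (gn n) t) atTop := by
  by_contra! hc
  obtain ⟨l, hl_gt, hl_lt⟩ := exists_between hc
  have hfreq : ∃ᶠ n in atTop, μ {x | l < gn n x} ≤ ENNReal.ofReal t := by
    refine (frequently_lt_of_liminf_lt (by isBoundedDefault) hl_gt).mono fun n hn => ?_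
    obtain ⟨l', hl', hl'l⟩ := sInf_lt_iff.1 hn
    exact (measure_mono fun x hx => hl'l.trans hx).trans hl'
  have hg : μ {x | l < g x} ≤ ENNReal.ofReal t :=
    (h l).trans (liminf_le_of_frequently_le' hfreq)
  exact hl_lt.not_ge (sInf_le hg)

theorem decRe_le_liminf_of_ae_le_liminf {g : α → ℝ≥0∞} {gn : ℕ → α → ℝ≥0∞}
    (h : ∀ᵐ x ∂μ, g x ≤ liminf (fun n => gn n x) atTop) (t : ℝ) :
    decRe μ g t ≤ liminf (fun n => decRe μ (gn n) t) atTop :=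
  decRe_le_liminf_of_measure_lt_le_liminf (measure_lt_le_liminf_of_ae_le_liminf h) t

end Fatou

section StarSet

variable {E F : Set (ℝ × ℝ)} {A : ℕ → Set (ℝ × ℝ)}

theorem phiSec_mono (h : E ⊆ F) : phiSec E ≤ phiSec F :=
  fun _ => measure_mono fun _ hy => h hy

theorem starSet_mono (h : E ⊆ F) : starSet E ⊆ starSet F :=
  fun p hp => ⟨hp.1, hp.2.1, hp.2.2.trans_le (decRe_mono (phiSec_mono h) p.1)⟩

theorem ae_phiSec_le_liminf (h : ∀ᵐ p, p ∈ E → ∀ᶠ n in atTop, p ∈ A n) :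
    ∀ᵐ x, phiSec E x ≤ liminf (fun n => phiSec (A n) x) atTop := by
  rw [Measure.volume_eq_prod] at h
  exact (Measure.ae_ae_of_ae_prod h).mono fun _ hx =>
    measure_le_liminf_of_ae_eventually_mem hx

theorem eventually_mem_starSet (h : ∀ᵐ p, p ∈ E → ∀ᶠ n in atTop, p ∈ A n)
    {x : ℝ × ℝ} (hx : x ∈ starSet E) : ∀ᶠ n in atTop, x ∈ starSet (A n) := by
  have hdec := decRe_le_liminf_of_ae_le_liminf (ae_phiSec_le_liminf h) x.1
  exact (eventually_lt_of_lt_liminf (hx.2.2.trans_le hdec)).mono fun _ hn => ⟨hx.1, hx.2.1, hn⟩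

end StarSet

theorem indicator_one_le_liminf {β : Type*} {E : Set β} {A : ℕ → Set β} {x : β}
    (h : x ∈ E → ∀ᶠ n in atTop, x ∈ A n) :
    E.indicator (fun _ => (1 : ℝ≥0∞)) x
      ≤ liminf (fun n => (A n).indicator (fun _ => (1 : ℝ≥0∞)) x) atTop := by
  by_cases hx : x ∈ E
  · rw [indicator_of_mem hx]
    refine le_liminf_of_le (by isBoundedDefault) ((h hx).mono fun _ hn => ?_)
    rw [indicator_of_mem hn]
  · simp [indicator_of_notMem hx]

theorem ae_levelSet_imp_eventually {β : Type*} [MeasurableSpace β] {ν : Measure β}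
    {f : β → ℝ} {fn : ℕ → β → ℝ}
    (h : ∀ᵐ x ∂ν, ENNReal.ofReal |f x| ≤ liminf (fun n => ENNReal.ofReal |fn n x|) atTop)
    {t : ℝ} (ht : 0 ≤ t) :
    ∀ᵐ x ∂ν, x ∈ {x | t < |f x|} → ∀ᶠ n in atTop, x ∈ {x | t < |fn n x|} := by
  refine h.mono fun x hx hlt => ?_
  have hlt' : ENNReal.ofReal t < ENNReal.ofReal |f x| :=
    (ofReal_lt_ofReal_iff_of_nonneg ht).2 hlt
  exact (eventually_lt_of_lt_liminf (hlt'.trans_le hx)).mono fun _ hn =>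
    (ofReal_lt_ofReal_iff_of_nonneg ht).1 hn

theorem antitone_starSet_levelSet (g : ℝ × ℝ → ℝ) :
    Antitone fun t : ℝ => starSet {p | t < |g p|} :=
  fun _ _ hab => starSet_mono fun _ hp => hab.trans_lt hp

theorem measurable_indicator_starSet_levelSet (g : ℝ × ℝ → ℝ) (x : ℝ × ℝ) :
    Measurable fun t : ℝ => (starSet {p | t < |g p|}).indicator (fun _ => (1 : ℝ≥0∞)) x :=
  Antitone.measurable fun _ _ hab =>
    indicator_le_indicator_of_subset (antitone_starSet_levelSet g hab) (fun _ => zero_le) x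

theorem rearr2_mono {f g : ℝ × ℝ → ℝ} (h : ∀ p, |f p| ≤ |g p|) (x : ℝ × ℝ) :
    rearr2 f x ≤ rearr2 g x :=
  lintegral_mono fun _ => indicator_le_indicator_of_subset
    (starSet_mono fun p hp => hp.trans_le (h p)) (fun _ => zero_le) x

theorem rearr2_le_liminf {f : ℝ × ℝ → ℝ} {fn : ℕ → ℝ × ℝ → ℝ}
    (h : ∀ᵐ p, ENNReal.ofReal |f p| ≤ liminf (fun n => ENNReal.ofReal |fn n p|) atTop)
    (x : ℝ × ℝ) : rearr2 f x ≤ liminf (fun n => rearr2 (fn n) x) atTop :=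
  calc rearr2 f x
      ≤ ∫⁻ t in Ioi 0, liminf (fun n =>
          (starSet {p | t < |fn n p|}).indicator (fun _ => (1 : ℝ≥0∞)) x) atTop :=
        setLIntegral_mono' measurableSet_Ioi fun _ ht => indicator_one_le_liminf
          (eventually_mem_starSet (ae_levelSet_imp_eventually h (le_of_lt ht)))
    _ ≤ liminf (fun n => rearr2 (fn n) x) atTop :=
        lintegral_liminf_le fun n => measurable_indicator_starSet_levelSet (fn n) x

theorem stmt10_general (f : ℝ × ℝ → ℝ) (fn : ℕ → ℝ × ℝ → ℝ)
    (h : ∀ᵐ x ∂(volume : Measure (ℝ × ℝ)),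
      ENNReal.ofReal |f x| ≤ Filter.liminf (fun n => ENNReal.ofReal |fn n x|) Filter.atTop) :
    (∀ x ∈ Quad,
        rearr2 f x ≤ Filter.liminf (fun n => rearr2 (fn n) x) Filter.atTop) ∧
      ((∀ x, Monotone fun n => |fn n x|) →
        (∀ x, Filter.Tendsto (fun n => ENNReal.ofReal |fn n x|) Filter.atTop
          (nhds (ENNReal.ofReal |f x|))) →
        ∀ x ∈ Quad, Monotone (fun n => rearr2 (fn n) x) ∧
          Filter.Tendsto (fun n => rearr2 (fn n) x) Filter.atTop (nhds (rearr2 f x))) := by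
  refine ⟨fun x _ => rearr2_le_liminf h x, fun hmono htend x _ => ?_⟩
  have hle : ∀ n p, |fn n p| ≤ |f p| := by
    intro n p
    have hmono_p : Monotone fun k => ENNReal.ofReal |fn k p| :=
      fun _ _ hab => ofReal_le_ofReal (hmono p hab)
    exact (ofReal_le_ofReal_iff (abs_nonneg _)).1 (hmono_p.ge_of_tendsto (htend p) n)
  have hrearr_mono : Monotone fun n => rearr2 (fn n) x :=
    fun _ _ hab => rearr2_mono (fun p => hmono p hab) x
  have hsup := tendsto_atTop_iSup hrearr_mono
  refine ⟨hrearr_mono, ?_⟩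
  convert hsup using 2
  exact le_antisymm ((rearr2_le_liminf h x).trans hsup.liminf_eq.le)
    (iSup_le fun n => rearr2_mono (hle n) x)

theorem stmt10 (f : ℝ × ℝ → ℝ) (fn : ℕ → ℝ × ℝ → ℝ)
    (hf : Measurable f) (hfn : ∀ n, Measurable (fn n))
    (h : ∀ᵐ x ∂(volume : Measure (ℝ × ℝ)),
      ENNReal.ofReal |f x| ≤ Filter.liminf (fun n => ENNReal.ofReal |fn n x|) Filter.atTop) :
    (∀ x ∈ Quad,
        rearr2 f x ≤ Filter.liminf (fun n => rearr2 (fn n) x) Filter.atTop) ∧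
      ((∀ x, Monotone fun n => |fn n x|) →
        (∀ x, Filter.Tendsto (fun n => ENNReal.ofReal |fn n x|) Filter.atTop
          (nhds (ENNReal.ofReal |f x|))) →
        ∀ x ∈ Quad, Monotone (fun n => rearr2 (fn n) x) ∧
          Filter.Tendsto (fun n => rearr2 (fn n) x) Filter.atTop (nhds (rearr2 f x))) :=
  stmt10_general f fn h
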